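/- arXiv:1905.05853 — 2 statements merged into one kernel-verified Lean document; each statement's English description precedes it below -/
import Mathlib

section
/- Let V be a real Hilbert space, let N, m be positive integers, let A be an m×N real matrix, and u ∈ V^m. A point x ∈ V^N minimizes F(z) := ‖z‖_{V,1} + (1/2)‖Az − u‖²_{V,2} over V^N if and only if, writing g := A*(u − Ax) ∈ V^N, for every index j ∈ {1,…,N}: if x_j ≠ 0 then g_j = x_j/‖x_j‖_V, and if x_j = 0 then ‖g_j‖_V ≤ 1. -/
/-!
With `g := A*(u − Ax)`, expanding the square gives the exact identity
`F z − F x = ∑ⱼ (‖zⱼ‖ − ‖xⱼ‖ − ⟪gⱼ, zⱼ − xⱼ⟫) + ½‖A(z − x)‖²`.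
Hence if every `gⱼ` is a subgradient of the norm at `xⱼ`, then `F z ≥ F x`. Conversely, moving only
the coordinate `j` shows that `gⱼ` is a subgradient of the norm at `xⱼ` up to a quadratic error term,
and convexity of the norm removes that error. Finally, the subgradients of the norm at `a` are
the `g` with `‖g‖ ≤ 1` and `⟪g, a⟫ = ‖a‖`; for `a ≠ 0` this leaves only `a / ‖a‖`.
-/

open scoped BigOperators
open Filter

variable {V : Type*}

noncomputable def mnorm1 [NormedAddCommGroup V] {N : ℕ} (z : Fin N → V) : ℝ := ∑ j, ‖z j‖

noncomputable def mnorm2 [NormedAddCommGroup V] {N : ℕ} (z : Fin N → V) : ℝ :=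
  Real.sqrt (∑ j, ‖z j‖ ^ 2)

def matVec [NormedAddCommGroup V] [Module ℝ V] {m N : ℕ}
    (A : Matrix (Fin m) (Fin N) ℝ) (z : Fin N → V) : Fin m → V :=
  fun i => ∑ j, A i j • z j

def matVecT [NormedAddCommGroup V] [Module ℝ V] {m N : ℕ}
    (A : Matrix (Fin m) (Fin N) ℝ) (v : Fin m → V) : Fin N → V :=
  fun j => ∑ i, A i j • v i

def IsSparse [Zero V] {N : ℕ} (s : ℕ) (z : Fin N → V) : Prop :=
  ∃ S : Finset (Fin N), S.card ≤ s ∧ ∀ j ∉ S, z j = 0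

def restrict [Zero V] {N : ℕ} (S : Finset (Fin N)) (z : Fin N → V) : Fin N → V :=
  fun j => if j ∈ S then z j else 0

noncomputable def softThresh [NormedAddCommGroup V] [Module ℝ V] (τ : ℝ) (x : V) : V :=
  (max (‖x‖ - τ) 0 / ‖x‖) • x

noncomputable def Sop [NormedAddCommGroup V] [Module ℝ V] {m N : ℕ}
    (τ : ℝ) (A : Matrix (Fin m) (Fin N) ℝ) (u : Fin m → V) (z : Fin N → V) : Fin N → V :=
  fun j => softThresh τ ((z - τ • matVecT A (matVec A z - u)) j)

noncomputable def specNorm {N : ℕ} (M : Matrix (Fin N) (Fin N) ℝ) : ℝ :=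
  ‖(Matrix.toEuclideanCLM (𝕜 := ℝ) M : EuclideanSpace ℝ (Fin N) →L[ℝ] EuclideanSpace ℝ (Fin N))‖

open scoped RealInnerProductSpace
open Set Topology

section Subgradient

variable {E : Type*} [NormedAddCommGroup E] [InnerProductSpace ℝ E]

def IsSubgradient (f : E → ℝ) (a g : E) : Prop :=
  ∀ w, ⟪g, w - a⟫ ≤ f w - f a

lemma le_of_forall_pos_le_one_le_add_mul {a b c : ℝ}
    (h : ∀ t : ℝ, 0 < t → t ≤ 1 → a ≤ b + t * c) : a ≤ b := by
  have hlim : Tendsto (fun t : ℝ => b + t * c) (𝓝[>] 0) (𝓝 b) := by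
    have : Tendsto (fun t : ℝ => b + t * c) (𝓝 0) (𝓝 (b + 0 * c)) :=
      ((continuous_id.mul continuous_const).const_add b).tendsto 0
    simpa using this.mono_left nhdsWithin_le_nhds
  refine ge_of_tendsto hlim ?_
  filter_upwards [Ioc_mem_nhdsGT one_pos] with t ht using h t ht.1 ht.2

theorem ConvexOn.isSubgradient_of_inner_sub_le_sub_add_sq {f : E → ℝ}
    (hf : ConvexOn ℝ univ f) {a g : E} {C : ℝ}
    (h : ∀ w, ⟪g, w - a⟫ ≤ f w - f a + C * ‖w - a‖ ^ 2) : IsSubgradient f a g := by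
  intro w
  refine le_of_forall_pos_le_one_le_add_mul (c := C * ‖w - a‖ ^ 2) fun t ht0 ht1 => ?_
  have hconv : f (a + t • (w - a)) ≤ (1 - t) * f a + t * f w := by
    have hcomb : (1 - t) • a + t • w = a + t • (w - a) := by
      rw [sub_smul, one_smul, smul_sub]; abel
    simpa only [hcomb, smul_eq_mul] using
      hf.2 (mem_univ a) (mem_univ w) (by linarith : 0 ≤ 1 - t) ht0.le (by ring)
  have hw := h (a + t • (w - a))
  rw [add_sub_cancel_left, real_inner_smul_right, norm_smul, Real.norm_of_nonneg ht0.le] at hw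
  have : t * ⟪g, w - a⟫ ≤ t * (f w - f a + t * (C * ‖w - a‖ ^ 2)) := by nlinarith
  exact le_of_mul_le_mul_left this ht0

theorem IsSubgradient.norm_le_one {a g : E} (h : IsSubgradient (‖·‖) a g) : ‖g‖ ≤ 1 := by
  have hg : ⟪g, a + g - a⟫ ≤ ‖a + g‖ - ‖a‖ := h _
  rw [add_sub_cancel_left, real_inner_self_eq_norm_sq] at hg
  nlinarith [norm_add_le a g, norm_nonneg g]

theorem isSubgradient_norm_iff {a g : E} :
    IsSubgradient (‖·‖) a g ↔ ‖g‖ ≤ 1 ∧ ⟪g, a⟫ = ‖a‖ := by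
  constructor
  · intro h
    refine ⟨h.norm_le_one, le_antisymm ?_ ?_⟩
    · have h2 : ⟪g, (2 : ℝ) • a - a⟫ ≤ ‖(2 : ℝ) • a‖ - ‖a‖ := h _
      rw [norm_smul, Real.norm_two, two_smul, add_sub_cancel_right] at h2
      linarith
    · have h0 : ⟪g, 0 - a⟫ ≤ ‖(0 : E)‖ - ‖a‖ := h 0
      rw [zero_sub, inner_neg_right, norm_zero] at h0
      linarith
  · rintro ⟨hg, hga⟩ w
    rw [inner_sub_right, hga]
    nlinarith [real_inner_le_norm g w, norm_nonneg w]

theorem isSubgradient_norm_iff_of_ne_zero {a g : E} (ha : a ≠ 0) :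
    IsSubgradient (‖·‖) a g ↔ g = ‖a‖⁻¹ • a := by
  have hna : ‖a‖ ≠ 0 := norm_ne_zero_iff.2 ha
  have hunit : ‖‖a‖⁻¹ • a‖ = 1 := by rw [norm_smul, norm_inv, norm_norm, inv_mul_cancel₀ hna]
  rw [isSubgradient_norm_iff]
  constructor
  · rintro ⟨hg, hga⟩
    have hdist : ‖g - ‖a‖⁻¹ • a‖ ^ 2 = ‖g‖ ^ 2 - 1 := by
      rw [norm_sub_sq_real, real_inner_smul_right, hunit, hga, inv_mul_cancel₀ hna]
      ring
    have hzero : ‖g - ‖a‖⁻¹ • a‖ = 0 := by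
      nlinarith [norm_nonneg (g - ‖a‖⁻¹ • a), norm_nonneg g]
    exact sub_eq_zero.1 (norm_eq_zero.1 hzero)
  · rintro rfl
    refine ⟨hunit.le, ?_⟩
    rw [real_inner_smul_left, real_inner_self_eq_norm_sq]
    field_simp

theorem isSubgradient_norm_iff_cases {a g : E} :
    IsSubgradient (‖·‖) a g ↔ (a ≠ 0 → g = ‖a‖⁻¹ • a) ∧ (a = 0 → ‖g‖ ≤ 1) := by
  by_cases ha : a = 0
  · simp [ha, isSubgradient_norm_iff]
  · simp [ha, isSubgradient_norm_iff_of_ne_zero ha]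

end Subgradient

section Lasso

variable [NormedAddCommGroup V] [InnerProductSpace ℝ V] {m N : ℕ} (A : Matrix (Fin m) (Fin N) ℝ)

noncomputable def lassoObjective (u : Fin m → V) (z : Fin N → V) : ℝ :=
  mnorm1 z + (1 / 2) * mnorm2 (matVec A z - u) ^ 2

omit [InnerProductSpace ℝ V] in
lemma mnorm2_sq (z : Fin N → V) : mnorm2 z ^ 2 = ∑ j, ‖z j‖ ^ 2 :=
  Real.sq_sqrt (Finset.sum_nonneg fun _ _ => sq_nonneg _)

lemma mnorm2_add_sq (r d : Fin N → V) :
    mnorm2 (r + d) ^ 2 = mnorm2 r ^ 2 + 2 * ∑ j, ⟪r j, d j⟫ + mnorm2 d ^ 2 := by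
  simp only [mnorm2_sq, Pi.add_apply, norm_add_sq_real, Finset.sum_add_distrib, Finset.mul_sum]

lemma matVec_sub (z x : Fin N → V) : matVec A (z - x) = matVec A z - matVec A x := by
  ext i
  simp only [matVec, Pi.sub_apply, smul_sub, Finset.sum_sub_distrib]

lemma matVecT_neg (v : Fin m → V) : matVecT A (-v) = -matVecT A v := by
  ext j
  simp only [matVecT, Pi.neg_apply, smul_neg, Finset.sum_neg_distrib]

lemma matVec_single (j : Fin N) (v : V) : matVec A (Pi.single j v) = fun i => A i j • v := by
  ext i
  simp [matVec, Pi.single_apply]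

lemma sum_inner_matVec (d : Fin N → V) (v : Fin m → V) :
    ∑ i, ⟪v i, matVec A d i⟫ = ∑ j, ⟪matVecT A v j, d j⟫ := by
  simp only [matVec, matVecT, sum_inner, inner_sum, real_inner_smul_left, real_inner_smul_right]
  exact Finset.sum_comm

lemma lassoObjective_sub (u : Fin m → V) (x z : Fin N → V) :
    lassoObjective A u z - lassoObjective A u x =
      ∑ j, (‖z j‖ - ‖x j‖ - ⟪matVecT A (u - matVec A x) j, z j - x j⟫) +
        (1 / 2) * mnorm2 (matVec A (z - x)) ^ 2 := by
  have hres : matVec A z - u = (matVec A x - u) + matVec A (z - x) := by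
    rw [matVec_sub]; abel
  have hcross : ∑ i, ⟪(matVec A x - u) i, matVec A (z - x) i⟫ =
      -∑ j, ⟪matVecT A (u - matVec A x) j, z j - x j⟫ := by
    rw [sum_inner_matVec, ← neg_sub, matVecT_neg, ← Finset.sum_neg_distrib]
    simp only [Pi.neg_apply, inner_neg_left, Pi.sub_apply]
  simp only [lassoObjective, mnorm1, hres, mnorm2_add_sq, hcross, Finset.sum_sub_distrib]
  ring

lemma lassoObjective_update_sub (u : Fin m → V) (x : Fin N → V) (j : Fin N) (w : V) :
    lassoObjective A u (Function.update x j w) - lassoObjective A u x =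
      ‖w‖ - ‖x j‖ - ⟪matVecT A (u - matVec A x) j, w - x j⟫ +
        (1 / 2) * ((∑ i, A i j ^ 2) * ‖w - x j‖ ^ 2) := by
  have hdiff : Function.update x j w - x = Pi.single j (w - x j) := by
    ext k
    rcases eq_or_ne k j with rfl | hk <;> simp [*]
  rw [lassoObjective_sub, hdiff, matVec_single, mnorm2_sq, Finset.sum_mul,
    Finset.sum_eq_single j (fun k _ hk => by simp [Function.update_of_ne hk]) (by simp)]
  simp only [Function.update_self, norm_smul, mul_pow, Real.norm_eq_abs, sq_abs]

end Lasso

theorem minimizer_iff_optimality_conditions_general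
    [NormedAddCommGroup V] [InnerProductSpace ℝ V]
    {N m : ℕ}
    (A : Matrix (Fin m) (Fin N) ℝ) (u : Fin m → V) (x : Fin N → V) :
    (∀ z : Fin N → V,
        mnorm1 x + (1 / 2) * mnorm2 (matVec A x - u) ^ 2 ≤
          mnorm1 z + (1 / 2) * mnorm2 (matVec A z - u) ^ 2) ↔
      ∀ j : Fin N,
        (x j ≠ 0 → matVecT A (u - matVec A x) j = ‖x j‖⁻¹ • x j) ∧
          (x j = 0 → ‖matVecT A (u - matVec A x) j‖ ≤ 1) := by
  change (∀ z, lassoObjective A u x ≤ lassoObjective A u z) ↔ _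
  simp only [← isSubgradient_norm_iff_cases]
  constructor
  · intro hmin j
    refine (convexOn_norm convex_univ).isSubgradient_of_inner_sub_le_sub_add_sq
      (C := (1 / 2) * ∑ i, A i j ^ 2) fun w => ?_
    have hchange := lassoObjective_update_sub A u x j w
    linarith [hmin (Function.update x j w)]
  · intro hsub z
    have hterms := Finset.sum_nonneg fun j (_ : j ∈ Finset.univ) => sub_nonneg.2 (hsub j (z j))
    have hchange := lassoObjective_sub A u x z
    linarith [sq_nonneg (mnorm2 (matVec A (z - x)))]

/-- optimality conditions: `x` minimizes
`F(z) = ‖z‖_{V,1} + (1/2)‖Az − u‖²_{V,2}` iff, with `g = A*(u − Ax)`, for every `j`: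
`g_j = x_j/‖x_j‖` whenever `x_j ≠ 0`, and `‖g_j‖ ≤ 1` whenever `x_j = 0`. -/
theorem minimizer_iff_optimality_conditions
    [NormedAddCommGroup V] [InnerProductSpace ℝ V] [CompleteSpace V]
    {N m : ℕ} (hN : 0 < N) (hm : 0 < m)
    (A : Matrix (Fin m) (Fin N) ℝ) (u : Fin m → V) (x : Fin N → V) :
    (∀ z : Fin N → V,
        mnorm1 x + (1 / 2) * mnorm2 (matVec A x - u) ^ 2 ≤
          mnorm1 z + (1 / 2) * mnorm2 (matVec A z - u) ^ 2) ↔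
      ∀ j : Fin N,
        (x j ≠ 0 → matVecT A (u - matVec A x) j = ‖x j‖⁻¹ • x j) ∧
          (x j = 0 → ‖matVecT A (u - matVec A x) j‖ ≤ 1) :=
  minimizer_iff_optimality_conditions_general A u x
end

section
/- Let V be a real separable Hilbert space, let N, m be positive integers, let A be an m×N real matrix, u ∈ V^m, and 0 < τ < 2/‖AᵀA‖₂. Let x* ∈ V^N be a minimizer of F(z) := ‖z‖_{V,1} + (1/2)‖Az − u‖²_{V,2}, set g* := A*(u − Ax*), and let j ∈ {1,…,N} be an index with x*_j = 0 and ‖g*_j‖_V < 1 (strict complementarity). Let (x^k) be generated by the forward-backward iteration x^{k+1} = S_τ(x^k) from any x⁰ ∈ V^N, where S_τ(z)_i := J_τ((z − τA*(Az − u))_i). Then the j-th component converges in finitely many steps: there exists K such that x^k_j = 0 for all k ≥ K. -/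
open scoped BigOperators
open Filter

variable {V : Type*}

open scoped RealInnerProductSpace Matrix Topology

/-!
The forward-backward step decreases `F` by at least `(1/τ - L/2)‖x^{k+1} - x^k‖²`, so the steps are
square-summable; the prox inequality tested at `x*`, together with convexity of the smooth part,
gives `F(x^{k+1}) - F(x*) ≲ ‖x^{k+1} - x^k‖`, hence `F(x^k) → F(x*)`. Strict complementarity turns
the gap into the error bound `(1 - ‖g*_j‖) ‖z_j‖ ≤ F(z) - F(x*)`, and the gap also controls
`‖A(z - x*)‖²`; so `x^k_j → 0` and the gradients converge to `-g*`. The argument of the `j`-th soft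
thresholding therefore tends to `τ g*_j`, of norm `< τ`, after which the thresholding returns `0`.
-/

lemma nonneg_of_forall_nonneg_add_mul {a b : ℝ} (h : ∀ t, 0 < t → t ≤ 1 → 0 ≤ a + t * b) :
    0 ≤ a := by
  have hlim : Tendsto (fun n : ℕ => a + 1 / ((n : ℝ) + 1) * b) atTop (𝓝 (a + 0 * b)) :=
    (tendsto_one_div_add_atTop_nhds_zero_nat.mul_const b).const_add a
  rw [zero_mul, add_zero] at hlim
  refine ge_of_tendsto' hlim fun n => h _ Nat.one_div_pos_of_nat ?_
  exact div_le_one_of_le₀ (by linarith [n.cast_nonneg (α := ℝ)]) (by positivity)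

/-- The variational inequality characterising `p = prox_{τφ} y` for convex `φ`. -/
def IsProxStep {E : Type*} [NormedAddCommGroup E] [InnerProductSpace ℝ E] (φ : E → ℝ) (τ : ℝ)
    (y p : E) : Prop :=
  ∀ z, τ * φ p + ⟪z - p, y - p⟫ ≤ τ * φ z

namespace ForwardBackward

variable {E F : Type*} [NormedAddCommGroup E] [InnerProductSpace ℝ E]
  [NormedAddCommGroup F] [InnerProductSpace ℝ F]

noncomputable def objective (φ : E → ℝ) (T : E →ₗ[ℝ] F) (u : F) (z : E) : ℝ :=
  φ z + ‖T z - u‖ ^ 2 / 2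

def forwardStep (T : E →ₗ[ℝ] F) (T' : F →ₗ[ℝ] E) (u : F) (τ : ℝ) (x : E) : E :=
  x - τ • T' (T x - u)

variable {T : E →ₗ[ℝ] F} {T' : F →ₗ[ℝ] E} {u : F} {φ : E → ℝ} {τ K : ℝ}

lemma norm_map_sub_sq_eq (hT : ∀ z w, ⟪T z, w⟫ = ⟪z, T' w⟫) (z z' : E) :
    ‖T z' - u‖ ^ 2 = ‖T z - u‖ ^ 2 + 2 * ⟪z' - z, T' (T z - u)⟫ + ‖T (z' - z)‖ ^ 2 := by
  rw [← hT, real_inner_comm, map_sub, ← norm_add_sq_real]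
  congr 2
  abel

lemma objective_sub_eq (hT : ∀ z w, ⟪T z, w⟫ = ⟪z, T' w⟫) (z z' : E) :
    objective φ T u z' - objective φ T u z =
      φ z' - φ z + ⟪z' - z, T' (T z - u)⟫ + ‖T (z' - z)‖ ^ 2 / 2 := by
  rw [objective, objective, norm_map_sub_sq_eq hT z z']
  ring

lemma inner_map_le (hK : 0 ≤ K) (hTK : ∀ d, ‖T d‖ ≤ K * ‖d‖) (a b : E) :
    ⟪T a, T b⟫ ≤ K ^ 2 * (‖a‖ * ‖b‖) := by
  calc ⟪T a, T b⟫ ≤ ‖T a‖ * ‖T b‖ := real_inner_le_norm _ _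
    _ ≤ (K * ‖a‖) * (K * ‖b‖) :=
        mul_le_mul (hTK a) (hTK b) (norm_nonneg _) (mul_nonneg hK (norm_nonneg _))
    _ = K ^ 2 * (‖a‖ * ‖b‖) := by ring

lemma objective_add_le_of_isProxStep (hT : ∀ z w, ⟪T z, w⟫ = ⟪z, T' w⟫) (hK : 0 ≤ K)
    (hTK : ∀ d, ‖T d‖ ≤ K * ‖d‖) (hτ : 0 ≤ τ) {x p : E}
    (h : IsProxStep φ τ (forwardStep T T' u τ x) p) :
    τ * objective φ T u p + (1 - τ * K ^ 2 / 2) * ‖p - x‖ ^ 2 ≤ τ * objective φ T u x := by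
  have hprox := h x
  have hinner :
      ⟪x - p, forwardStep T T' u τ x - p⟫ = ‖p - x‖ ^ 2 - τ * ⟪x - p, T' (T x - u)⟫ := by
    rw [forwardStep, sub_right_comm, inner_sub_right, real_inner_self_eq_norm_sq, norm_sub_rev,
      real_inner_smul_right]
  have hquad : ‖T (p - x)‖ ^ 2 ≤ K ^ 2 * ‖p - x‖ ^ 2 := by
    simpa [sq] using inner_map_le hK hTK (p - x) (p - x)
  have hexp := objective_sub_eq (φ := φ) (u := u) hT x p
  have hflip : ⟪x - p, T' (T x - u)⟫ = -⟪p - x, T' (T x - u)⟫ := by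
    rw [← inner_neg_left, neg_sub]
  linear_combination hprox + τ * hexp + (τ / 2) * hquad - hinner + τ * hflip

lemma objective_sub_le_of_isProxStep (hT : ∀ z w, ⟪T z, w⟫ = ⟪z, T' w⟫) (hK : 0 ≤ K)
    (hTK : ∀ d, ‖T d‖ ≤ K * ‖d‖) (hτ : 0 ≤ τ) {x p : E}
    (h : IsProxStep φ τ (forwardStep T T' u τ x) p) (z : E) :
    τ * (objective φ T u p - objective φ T u z) ≤ (1 + τ * K ^ 2) * (‖z - p‖ * ‖p - x‖) := by
  have hprox := h z
  have hexp := objective_sub_eq (φ := φ) (u := u) hT p z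
  have hgrad : T' (T x - u) - T' (T p - u) = T' (T (x - p)) := by
    rw [← map_sub, sub_sub_sub_cancel_right, ← map_sub]
  have hsplit : ⟪z - p, forwardStep T T' u τ x - p⟫ = ⟪z - p, x - p⟫
      - τ * ⟪z - p, T' (T x - u) - T' (T p - u)⟫ - τ * ⟪z - p, T' (T p - u)⟫ := by
    simp only [forwardStep, inner_sub_right, real_inner_smul_right]
    ring
  have hcross : ⟪z - p, T' (T x - u) - T' (T p - u)⟫ ≤ K ^ 2 * (‖z - p‖ * ‖p - x‖) := by
    rw [hgrad, ← hT, norm_sub_rev p x]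
    exact inner_map_le hK hTK _ _
  have hfirst : -⟪z - p, x - p⟫ ≤ ‖z - p‖ * ‖p - x‖ := by
    rw [← inner_neg_right, neg_sub]
    exact real_inner_le_norm _ _
  have hsq : 0 ≤ ‖T (z - p)‖ ^ 2 := sq_nonneg _
  nlinarith [mul_le_mul_of_nonneg_left hcross hτ]

lemma norm_le_objective (hφ : ∀ z, ‖z‖ ≤ φ z) (z : E) : ‖z‖ ≤ objective φ T u z := by
  have := sq_nonneg ‖T z - u‖
  rw [objective]
  linarith [hφ z]

lemma le_add_inner_of_isMin (hT : ∀ z w, ⟪T z, w⟫ = ⟪z, T' w⟫) (hφ : ConvexOn ℝ Set.univ φ)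
    {xs : E} (hmin : ∀ z, objective φ T u xs ≤ objective φ T u z) (z : E) :
    φ xs ≤ φ z + ⟪z - xs, T' (T xs - u)⟫ := by
  suffices 0 ≤ φ z - φ xs + ⟪z - xs, T' (T xs - u)⟫ by linarith
  refine nonneg_of_forall_nonneg_add_mul (b := ‖T (z - xs)‖ ^ 2 / 2) fun t ht0 ht1 => ?_
  have hconv := hφ.2 (Set.mem_univ xs) (Set.mem_univ z) (sub_nonneg.mpr ht1) ht0.le
    (sub_add_cancel 1 t)
  have hzt : (1 - t) • xs + t • z - xs = t • (z - xs) := by module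
  have hexp := objective_sub_eq (φ := φ) (u := u) hT xs ((1 - t) • xs + t • z)
  rw [hzt, real_inner_smul_left, map_smul, norm_smul, Real.norm_of_nonneg ht0.le] at hexp
  simp only [smul_eq_mul] at hconv
  have := hmin ((1 - t) • xs + t • z)
  nlinarith

lemma sq_norm_map_sub_le (hT : ∀ z w, ⟪T z, w⟫ = ⟪z, T' w⟫) (hφ : ConvexOn ℝ Set.univ φ)
    {xs : E} (hmin : ∀ z, objective φ T u xs ≤ objective φ T u z) (z : E) :
    ‖T (z - xs)‖ ^ 2 ≤ 2 * (objective φ T u z - objective φ T u xs) := by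
  linarith [objective_sub_eq (φ := φ) (u := u) hT xs z, le_add_inner_of_isMin hT hφ hmin z]

lemma norm_adjoint_le (hT : ∀ z w, ⟪T z, w⟫ = ⟪z, T' w⟫) (hK : 0 ≤ K)
    (hTK : ∀ d, ‖T d‖ ≤ K * ‖d‖) (w : F) : ‖T' w‖ ≤ K * ‖w‖ := by
  rcases (norm_nonneg (T' w)).eq_or_lt with h | h
  · rw [← h]; positivity
  refine le_of_mul_le_mul_left ?_ h
  calc ‖T' w‖ * ‖T' w‖ = ⟪T (T' w), w⟫ := by rw [hT, real_inner_self_eq_norm_mul_norm]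
    _ ≤ ‖T (T' w)‖ * ‖w‖ := real_inner_le_norm _ _
    _ ≤ K * ‖T' w‖ * ‖w‖ := by gcongr; exact hTK _
    _ = ‖T' w‖ * (K * ‖w‖) := by ring

lemma tendsto_grad_of_tendsto_objective (hT : ∀ z w, ⟪T z, w⟫ = ⟪z, T' w⟫) (hK : 0 ≤ K)
    (hTK : ∀ d, ‖T d‖ ≤ K * ‖d‖) (hφ : ConvexOn ℝ Set.univ φ) {xs : E}
    (hmin : ∀ z, objective φ T u xs ≤ objective φ T u z) {x : ℕ → E}
    (hx : Tendsto (fun k => objective φ T u (x k)) atTop (𝓝 (objective φ T u xs))) :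
    Tendsto (fun k => T' (T (x k) - u)) atTop (𝓝 (T' (T xs - u))) := by
  rw [tendsto_iff_norm_sub_tendsto_zero]
  have hlim : Tendsto (fun k => K * √(2 * (objective φ T u (x k) - objective φ T u xs)))
      atTop (𝓝 0) := by
    simpa using ((hx.sub_const (objective φ T u xs)).const_mul 2).sqrt.const_mul K
  refine squeeze_zero (fun _ => norm_nonneg _) (fun k => ?_) hlim
  rw [← map_sub, sub_sub_sub_cancel_right, ← map_sub]
  calc ‖T' (T (x k - xs))‖ ≤ K * ‖T (x k - xs)‖ := norm_adjoint_le hT hK hTK _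
    _ ≤ K * √(2 * (objective φ T u (x k) - objective φ T u xs)) := by
        gcongr
        exact Real.le_sqrt_of_sq_le (sq_norm_map_sub_le hT hφ hmin _)

section Iterates

variable {x : ℕ → E}

lemma antitone_objective (hT : ∀ z w, ⟪T z, w⟫ = ⟪z, T' w⟫) (hK : 0 ≤ K)
    (hTK : ∀ d, ‖T d‖ ≤ K * ‖d‖) (hτ : 0 < τ) (hτK : τ * K ^ 2 ≤ 2)
    (hx : ∀ k, IsProxStep φ τ (forwardStep T T' u τ (x k)) (x (k + 1))) :
    Antitone fun k => objective φ T u (x k) := by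
  refine antitone_nat_of_succ_le fun k => le_of_mul_le_mul_left ?_ hτ
  have := objective_add_le_of_isProxStep hT hK hTK hτ.le (hx k)
  nlinarith [sq_nonneg ‖x (k + 1) - x k‖]

lemma tendsto_norm_succ_sub_zero (hT : ∀ z w, ⟪T z, w⟫ = ⟪z, T' w⟫) (hK : 0 ≤ K)
    (hTK : ∀ d, ‖T d‖ ≤ K * ‖d‖) (hτ : 0 < τ) (hτK : τ * K ^ 2 < 2) {xs : E}
    (hmin : ∀ z, objective φ T u xs ≤ objective φ T u z)
    (hx : ∀ k, IsProxStep φ τ (forwardStep T T' u τ (x k)) (x (k + 1))) :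
    Tendsto (fun k => ‖x (k + 1) - x k‖) atTop (𝓝 0) := by
  have hc : 0 < 1 - τ * K ^ 2 / 2 := by linarith
  have hsum : ∀ n, ∑ k ∈ Finset.range n, ‖x (k + 1) - x k‖ ^ 2
      ≤ τ * (objective φ T u (x 0) - objective φ T u xs) / (1 - τ * K ^ 2 / 2) := fun n => by
    rw [le_div_iff₀ hc, Finset.sum_mul]
    calc ∑ k ∈ Finset.range n, ‖x (k + 1) - x k‖ ^ 2 * (1 - τ * K ^ 2 / 2)
        ≤ ∑ k ∈ Finset.range n, τ * (objective φ T u (x k) - objective φ T u (x (k + 1))) :=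
          Finset.sum_le_sum fun k _ => by
            linarith [objective_add_le_of_isProxStep hT hK hTK hτ.le (hx k)]
      _ = τ * (objective φ T u (x 0) - objective φ T u (x n)) := by
          rw [← Finset.mul_sum, Finset.sum_range_sub']
      _ ≤ τ * (objective φ T u (x 0) - objective φ T u xs) := by
          gcongr; exact hmin _
  have hsq := (summable_of_sum_range_le (fun _ => sq_nonneg _) hsum).tendsto_atTop_zero
  simpa using hsq.sqrt

theorem tendsto_objective (hT : ∀ z w, ⟪T z, w⟫ = ⟪z, T' w⟫) (hK : 0 ≤ K)
    (hTK : ∀ d, ‖T d‖ ≤ K * ‖d‖) (hτ : 0 < τ) (hτK : τ * K ^ 2 < 2)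
    (hφ : ∀ z, ‖z‖ ≤ φ z) {xs : E} (hmin : ∀ z, objective φ T u xs ≤ objective φ T u z)
    (hx : ∀ k, IsProxStep φ τ (forwardStep T T' u τ (x k)) (x (k + 1))) :
    Tendsto (fun k => objective φ T u (x k)) atTop (𝓝 (objective φ T u xs)) := by
  have hanti := antitone_objective hT hK hTK hτ hτK.le hx
  set C := (1 + τ * K ^ 2) / τ * (2 * objective φ T u (x 0))
  have hbound : ∀ k, objective φ T u (x (k + 1)) - objective φ T u xs
      ≤ C * ‖x (k + 1) - x k‖ := fun k => by
    have hdist : ‖xs - x (k + 1)‖ ≤ 2 * objective φ T u (x 0) := by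
      calc ‖xs - x (k + 1)‖ ≤ ‖xs‖ + ‖x (k + 1)‖ := norm_sub_le _ _
        _ ≤ objective φ T u xs + objective φ T u (x (k + 1)) :=
            add_le_add (norm_le_objective hφ _) (norm_le_objective hφ _)
        _ ≤ 2 * objective φ T u (x 0) := by linarith [hmin (x 0), hanti (Nat.zero_le (k + 1))]
    refine le_of_mul_le_mul_left ?_ hτ
    calc τ * (objective φ T u (x (k + 1)) - objective φ T u xs)
        ≤ (1 + τ * K ^ 2) * (‖xs - x (k + 1)‖ * ‖x (k + 1) - x k‖) :=
          objective_sub_le_of_isProxStep hT hK hTK hτ.le (hx k) xs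
      _ ≤ (1 + τ * K ^ 2) * (2 * objective φ T u (x 0) * ‖x (k + 1) - x k‖) := by gcongr
      _ = τ * (C * ‖x (k + 1) - x k‖) := by simp only [C]; field_simp
  have hlim : Tendsto (fun k => C * ‖x (k + 1) - x k‖) atTop (𝓝 0) := by
    simpa using (tendsto_norm_succ_sub_zero hT hK hTK hτ hτK hmin hx).const_mul C
  rw [← tendsto_add_atTop_iff_nat 1, tendsto_iff_norm_sub_tendsto_zero]
  refine squeeze_zero (fun _ => norm_nonneg _) (fun k => ?_) hlim
  rw [Real.norm_of_nonneg (sub_nonneg.mpr (hmin _))]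
  exact hbound k

end Iterates

end ForwardBackward

section SoftThreshold

lemma softThresh_of_norm_le [NormedAddCommGroup V] [Module ℝ V] {τ : ℝ} {y : V} (h : ‖y‖ ≤ τ) :
    softThresh τ y = 0 := by
  rw [softThresh, max_eq_right (sub_nonpos.mpr h), zero_div, zero_smul]

lemma eventually_softThresh_eq_zero [NormedAddCommGroup V] [Module ℝ V] {τ : ℝ} {y : ℕ → V}
    {y₀ : V} (hy : Tendsto y atTop (𝓝 y₀)) (h : ‖y₀‖ < τ) :
    ∀ᶠ k in atTop, softThresh τ (y k) = 0 :=
  (hy.norm.eventually (gt_mem_nhds h)).mono fun _ hk => softThresh_of_norm_le hk.le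

variable [NormedAddCommGroup V] [InnerProductSpace ℝ V]

lemma isProxStep_softThresh {τ : ℝ} (hτ : 0 ≤ τ) (y : V) :
    IsProxStep (‖·‖) τ y (softThresh τ y) := by
  intro z
  set m := max (‖y‖ - τ) 0
  set c := m / ‖y‖
  have hm : m * (m - (‖y‖ - τ)) = 0 := by
    rcases le_total (‖y‖ - τ) 0 with h | h
    · simp [m, max_eq_right h]
    · simp [m, max_eq_left h]
  have hmy : m ≤ ‖y‖ := max_le (by linarith) (norm_nonneg y)
  have hc0 : 0 ≤ c := div_nonneg (le_max_right _ _) (norm_nonneg y)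
  have hc1 : c ≤ 1 := div_le_one_of_le₀ hmy (norm_nonneg y)
  have hcy : c * ‖y‖ = m := by
    rcases (norm_nonneg y).eq_or_lt with h | h
    · rw [← h, mul_zero]
      exact (max_eq_right (by linarith)).symm
    · exact div_mul_cancel₀ m h.ne'
  have hcs : (1 - c) * ⟪z, y⟫ ≤ (1 - c) * (‖z‖ * ‖y‖) :=
    mul_le_mul_of_nonneg_left (real_inner_le_norm z y) (by linarith)
  have hlhs : τ * ‖c • y‖ + ⟪z - c • y, y - c • y⟫
      = τ * (c * ‖y‖) + (1 - c) * ⟪z, y⟫ - (1 - c) * c * (‖y‖ * ‖y‖) := by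
    rw [norm_smul, Real.norm_of_nonneg hc0, show y - c • y = (1 - c) • y by module,
      real_inner_smul_right, inner_sub_left, real_inner_smul_left,
      real_inner_self_eq_norm_mul_norm]
    ring
  show τ * ‖c • y‖ + ⟪z - c • y, y - c • y⟫ ≤ τ * ‖z‖
  have hcs' : (1 - c) * (‖z‖ * ‖y‖) ≤ τ * ‖z‖ := by
    have : ‖y‖ - m ≤ τ := by linarith [le_max_left (‖y‖ - τ) 0]
    rw [show (1 - c) * (‖z‖ * ‖y‖) = ‖z‖ * (‖y‖ - c * ‖y‖) by ring, hcy, mul_comm τ]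
    exact mul_le_mul_of_nonneg_left this (norm_nonneg z)
  have hzero : τ * (c * ‖y‖) - (1 - c) * c * (‖y‖ * ‖y‖) = 0 := by
    rw [show (1 - c) * c * (‖y‖ * ‖y‖) = (‖y‖ - c * ‖y‖) * (c * ‖y‖) by ring, hcy]
    linarith
  linarith

lemma IsProxStep.piLp {ι : Type*} [Fintype ι] {ψ : V → ℝ} {τ : ℝ} {y p : ι → V}
    (h : ∀ i, IsProxStep ψ τ (y i) (p i)) :
    IsProxStep (fun z : WithLp 2 (ι → V) => ∑ i, ψ (z i)) τ (WithLp.toLp 2 y)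
      (WithLp.toLp 2 p) := by
  intro z
  simp only [PiLp.inner_apply, Finset.mul_sum, ← Finset.sum_add_distrib]
  exact Finset.sum_le_sum fun i _ => h i (z i)

end SoftThreshold

section MatVec

variable {m N : ℕ}

lemma sum_sq_mulVec_le (A : Matrix (Fin m) (Fin N) ℝ) (v : Fin N → ℝ) :
    ∑ i, (A *ᵥ v) i ^ 2 ≤ specNorm (Aᵀ * A) * ∑ j, v j ^ 2 := by
  set M := Matrix.toEuclideanCLM (𝕜 := ℝ) (Aᵀ * A)
  set w : EuclideanSpace ℝ (Fin N) := WithLp.toLp 2 v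
  have hquad : ∑ i, (A *ᵥ v) i ^ 2 = ⟪w, M w⟫ := by
    rw [Matrix.toEuclideanCLM_toLp, EuclideanSpace.inner_eq_star_dotProduct, star_trivial,
      ← Matrix.mulVec_mulVec, dotProduct_comm, Matrix.dotProduct_mulVec,
      Matrix.vecMul_transpose]
    simp [w, dotProduct, sq]
  have hw : ‖w‖ ^ 2 = ∑ j, v j ^ 2 := by simp [w, EuclideanSpace.norm_sq_eq]
  calc ∑ i, (A *ᵥ v) i ^ 2 = ⟪w, M w⟫ := hquad
    _ ≤ ‖w‖ * ‖M w‖ := real_inner_le_norm _ _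
    _ ≤ ‖w‖ * (‖M‖ * ‖w‖) := by gcongr; exact M.le_opNorm w
    _ = specNorm (Aᵀ * A) * ∑ j, v j ^ 2 := by rw [← hw, specNorm]; ring

variable [NormedAddCommGroup V] [InnerProductSpace ℝ V]

lemma sum_norm_sq_matVec_le_of_finiteDimensional [FiniteDimensional ℝ V]
    (A : Matrix (Fin m) (Fin N) ℝ) (d : Fin N → V) :
    ∑ i, ‖matVec A d i‖ ^ 2 ≤ specNorm (Aᵀ * A) * ∑ j, ‖d j‖ ^ 2 := by
  set b := stdOrthonormalBasis ℝ V
  have hnorm : ∀ w : V, ‖w‖ ^ 2 = ∑ l, ⟪b l, w⟫ ^ 2 := fun w => by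
    rw [← real_inner_self_eq_norm_sq, ← b.sum_inner_mul_inner w w]
    simp_rw [real_inner_comm w, sq]
  have hcoord : ∀ i l, ⟪b l, matVec A d i⟫ = (A *ᵥ fun j => ⟪b l, d j⟫) i := fun i l => by
    simp [matVec, inner_sum, real_inner_smul_right, Matrix.mulVec, dotProduct]
  calc ∑ i, ‖matVec A d i‖ ^ 2 = ∑ l, ∑ i, (A *ᵥ fun j => ⟪b l, d j⟫) i ^ 2 := by
        simp_rw [hnorm, hcoord]; exact Finset.sum_comm
    _ ≤ ∑ l, specNorm (Aᵀ * A) * ∑ j, ⟪b l, d j⟫ ^ 2 :=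
        Finset.sum_le_sum fun l _ => sum_sq_mulVec_le A _
    _ = specNorm (Aᵀ * A) * ∑ j, ‖d j‖ ^ 2 := by
        simp_rw [hnorm, ← Finset.mul_sum]; rw [Finset.sum_comm]

lemma sum_norm_sq_matVec_le (A : Matrix (Fin m) (Fin N) ℝ) (d : Fin N → V) :
    ∑ i, ‖matVec A d i‖ ^ 2 ≤ specNorm (Aᵀ * A) * ∑ j, ‖d j‖ ^ 2 := by
  have := FiniteDimensional.span_of_finite ℝ (Set.finite_range d)
  let d' : Fin N → Submodule.span ℝ (Set.range d) :=
    fun j => ⟨d j, Submodule.subset_span ⟨j, rfl⟩⟩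
  simpa [d', matVec] using sum_norm_sq_matVec_le_of_finiteDimensional A d'

variable (V) in
def matVecₗ (A : Matrix (Fin m) (Fin N) ℝ) :
    WithLp 2 (Fin N → V) →ₗ[ℝ] WithLp 2 (Fin m → V) where
  toFun z := WithLp.toLp 2 (matVec A z.ofLp)
  map_add' z w := by
    ext i
    simp [matVec, smul_add, Finset.sum_add_distrib]
  map_smul' c z := by
    ext i
    simp [matVec, Finset.smul_sum, smul_comm c]

lemma matVecₗ_apply (A : Matrix (Fin m) (Fin N) ℝ) (z : Fin N → V) :
    matVecₗ V A (WithLp.toLp 2 z) = WithLp.toLp 2 (matVec A z) := rfl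

lemma inner_matVecₗ (A : Matrix (Fin m) (Fin N) ℝ) (z : WithLp 2 (Fin N → V))
    (w : WithLp 2 (Fin m → V)) : ⟪matVecₗ V A z, w⟫ = ⟪z, matVecₗ V Aᵀ w⟫ := by
  simp only [PiLp.inner_apply, matVecₗ, LinearMap.coe_mk, AddHom.coe_mk, matVec,
    sum_inner, inner_sum, real_inner_smul_left, real_inner_smul_right, Matrix.transpose_apply]
  exact Finset.sum_comm

lemma norm_matVecₗ_le (A : Matrix (Fin m) (Fin N) ℝ) (d : WithLp 2 (Fin N → V)) :
    ‖matVecₗ V A d‖ ≤ √(specNorm (Aᵀ * A)) * ‖d‖ := by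
  have h : ‖matVecₗ V A d‖ ^ 2 ≤ specNorm (Aᵀ * A) * ‖d‖ ^ 2 := by
    rw [PiLp.norm_sq_eq_of_L2, PiLp.norm_sq_eq_of_L2]
    exact sum_norm_sq_matVec_le A d.ofLp
  rw [← Real.sqrt_sq (norm_nonneg d), ← Real.sqrt_mul' _ (sq_nonneg _)]
  exact Real.le_sqrt_of_sq_le h

end MatVec

section L1Norm

variable [NormedAddCommGroup V] {N : ℕ}

lemma mnorm2_eq_norm (w : Fin N → V) : mnorm2 w = ‖WithLp.toLp 2 w‖ :=
  (PiLp.norm_eq_of_L2 _).symm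

lemma norm_le_mnorm1 (z : WithLp 2 (Fin N → V)) : ‖z‖ ≤ mnorm1 z.ofLp := by
  refine le_of_sq_le_sq ?_ (Finset.sum_nonneg fun j _ => norm_nonneg _)
  rw [PiLp.norm_sq_eq_of_L2, mnorm1]
  exact Finset.sum_sq_le_sq_sum_of_nonneg fun j _ => norm_nonneg _

lemma convexOn_mnorm1 [NormedSpace ℝ V] :
    ConvexOn ℝ Set.univ fun z : WithLp 2 (Fin N → V) => mnorm1 z.ofLp := by
  refine ⟨convex_univ, fun z _ w _ a b ha hb _ => ?_⟩
  simp only [mnorm1, smul_eq_mul, Finset.mul_sum, ← Finset.sum_add_distrib]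
  refine Finset.sum_le_sum fun j _ => ?_
  calc ‖(a • z + b • w).ofLp j‖ ≤ ‖a • z.ofLp j‖ + ‖b • w.ofLp j‖ := norm_add_le _ _
    _ = a * ‖z.ofLp j‖ + b * ‖w.ofLp j‖ := by
        rw [norm_smul, norm_smul, Real.norm_of_nonneg ha, Real.norm_of_nonneg hb]

variable [InnerProductSpace ℝ V]

lemma mnorm1_sub_add_inner_eq (z xs G : WithLp 2 (Fin N → V)) :
    mnorm1 z.ofLp - mnorm1 xs.ofLp + ⟪z - xs, G⟫
      = ∑ j, (‖z j‖ - ‖xs j‖ + ⟪z j - xs j, G j⟫) := by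
  simp only [mnorm1, PiLp.inner_apply, Finset.sum_add_distrib, Finset.sum_sub_distrib]
  rfl

variable {xs G : WithLp 2 (Fin N → V)}

lemma norm_le_norm_add_inner_apply (h : ∀ z, mnorm1 xs.ofLp ≤ mnorm1 z.ofLp + ⟪z - xs, G⟫)
    (j : Fin N) (v : V) : ‖xs j‖ ≤ ‖v‖ + ⟪v - xs j, G j⟫ := by
  have := h (WithLp.toLp 2 (Function.update xs.ofLp j v))
  rw [← sub_nonneg, add_sub_right_comm, mnorm1_sub_add_inner_eq,
    Fintype.sum_eq_single j fun k hk => by simp [Function.update_of_ne hk]] at this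
  simp only [Function.update_self] at this
  linarith

lemma mul_norm_apply_le (h : ∀ z, mnorm1 xs.ofLp ≤ mnorm1 z.ofLp + ⟪z - xs, G⟫) {j : Fin N}
    (hj : xs j = 0) (z : WithLp 2 (Fin N → V)) :
    (1 - ‖G j‖) * ‖z j‖ ≤ mnorm1 z.ofLp - mnorm1 xs.ofLp + ⟪z - xs, G⟫ := by
  rw [mnorm1_sub_add_inner_eq]
  refine le_trans ?_ (Finset.single_le_sum (fun k _ => ?_) (Finset.mem_univ j))
  · rw [hj, norm_zero, sub_zero, sub_zero]
    linarith [neg_le_of_abs_le (abs_real_inner_le_norm (z j) (G j))]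
  · linarith [norm_le_norm_add_inner_apply h k (z k)]

end L1Norm

section Lasso

open ForwardBackward

variable [NormedAddCommGroup V] [InnerProductSpace ℝ V] {m N : ℕ}

lemma tendsto_apply_of_tendsto_objective {F : Type*} [NormedAddCommGroup F]
    [InnerProductSpace ℝ F] {T : WithLp 2 (Fin N → V) →ₗ[ℝ] F} {T' : F →ₗ[ℝ] WithLp 2 (Fin N → V)}
    {u : F} (hT : ∀ z w, ⟪T z, w⟫ = ⟪z, T' w⟫) {xs : WithLp 2 (Fin N → V)}
    (hmin : ∀ z, objective (mnorm1 ·.ofLp) T u xs ≤ objective (mnorm1 ·.ofLp) T u z) {j : Fin N}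
    (hj : xs j = 0) (hgj : ‖T' (T xs - u) j‖ < 1) {x : ℕ → WithLp 2 (Fin N → V)}
    (hx : Tendsto (fun k => objective (mnorm1 ·.ofLp) T u (x k)) atTop
      (𝓝 (objective (mnorm1 ·.ofLp) T u xs))) :
    Tendsto (fun k => x k j) atTop (𝓝 0) := by
  have hsub := le_add_inner_of_isMin hT convexOn_mnorm1 hmin
  have hgap : Tendsto (fun k => (objective (mnorm1 ·.ofLp) T u (x k)
      - objective (mnorm1 ·.ofLp) T u xs) / (1 - ‖T' (T xs - u) j‖)) atTop (𝓝 0) := by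
    simpa using (hx.sub_const (objective (mnorm1 ·.ofLp) T u xs)).div_const
      (1 - ‖T' (T xs - u) j‖)
  rw [tendsto_zero_iff_norm_tendsto_zero]
  refine squeeze_zero (fun _ => norm_nonneg _) (fun k => ?_) hgap
  rw [le_div_iff₀ (by linarith), mul_comm]
  have := mul_norm_apply_le hsub hj (x k)
  linarith [objective_sub_eq (φ := (mnorm1 ·.ofLp)) (u := u) hT xs (x k),
    sq_nonneg ‖T (x k - xs)‖]

lemma tendsto_forwardStep_apply {F : Type*} [NormedAddCommGroup F] [InnerProductSpace ℝ F]
    {T : WithLp 2 (Fin N → V) →ₗ[ℝ] F} {T' : F →ₗ[ℝ] WithLp 2 (Fin N → V)} {u : F} {τ K : ℝ}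
    (hT : ∀ z w, ⟪T z, w⟫ = ⟪z, T' w⟫) (hK : 0 ≤ K) (hTK : ∀ d, ‖T d‖ ≤ K * ‖d‖)
    {xs : WithLp 2 (Fin N → V)}
    (hmin : ∀ z, objective (mnorm1 ·.ofLp) T u xs ≤ objective (mnorm1 ·.ofLp) T u z) {j : Fin N}
    (hj : xs j = 0) (hgj : ‖T' (T xs - u) j‖ < 1) {x : ℕ → WithLp 2 (Fin N → V)}
    (hx : Tendsto (fun k => objective (mnorm1 ·.ofLp) T u (x k)) atTop
      (𝓝 (objective (mnorm1 ·.ofLp) T u xs))) :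
    Tendsto (fun k => forwardStep T T' u τ (x k) j) atTop (𝓝 (-(τ • T' (T xs - u) j))) := by
  have hgrad := tendsto_grad_of_tendsto_objective hT hK hTK convexOn_mnorm1 hmin hx
  simpa [forwardStep] using (tendsto_apply_of_tendsto_objective hT hmin hj hgj hx).sub
    ((((PiLp.continuous_apply 2 _ j).tendsto _).comp hgrad).const_smul τ)

lemma objective_matVecₗ (A : Matrix (Fin m) (Fin N) ℝ) (u : Fin m → V) (z : Fin N → V) :
    objective (mnorm1 ·.ofLp) (matVecₗ V A) (WithLp.toLp 2 u) (WithLp.toLp 2 z)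
      = mnorm1 z + (1 / 2) * mnorm2 (matVec A z - u) ^ 2 := by
  rw [objective, mnorm2_eq_norm, WithLp.toLp_sub, matVecₗ_apply]
  ring

lemma isProxStep_Sop {τ : ℝ} (hτ : 0 ≤ τ) (A : Matrix (Fin m) (Fin N) ℝ) (u : Fin m → V)
    (z : Fin N → V) :
    IsProxStep (mnorm1 ·.ofLp) τ
      (forwardStep (matVecₗ V A) (matVecₗ V Aᵀ) (WithLp.toLp 2 u) τ (WithLp.toLp 2 z))
      (WithLp.toLp 2 (Sop τ A u z)) :=
  IsProxStep.piLp fun _ => isProxStep_softThresh hτ _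

lemma norm_matVecₗ_transpose_apply (A : Matrix (Fin m) (Fin N) ℝ) (u : Fin m → V)
    (z : Fin N → V) (j : Fin N) :
    ‖matVecₗ V Aᵀ (matVecₗ V A (WithLp.toLp 2 z) - WithLp.toLp 2 u) j‖
      = ‖matVecT A (u - matVec A z) j‖ := by
  rw [← norm_neg]
  simp [matVecₗ, matVecT, matVec, Finset.sum_sub_distrib, smul_sub]

lemma mul_sq_sqrt_specNorm_lt {M : Matrix (Fin N) (Fin N) ℝ} {τ : ℝ} (hτ0 : 0 < τ)
    (hτ : τ < 2 / specNorm M) : τ * √(specNorm M) ^ 2 < 2 := by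
  have hL : 0 < specNorm M := by
    by_contra! h
    rw [div_eq_zero_iff.mpr (Or.inr (le_antisymm h (norm_nonneg _)))] at hτ
    linarith
  rwa [Real.sq_sqrt hL.le, ← lt_div_iff₀ hL]

end Lasso

open ForwardBackward in
theorem finite_convergence_of_strict_complementarity_general
    [NormedAddCommGroup V] [InnerProductSpace ℝ V]
    {N m : ℕ}
    (A : Matrix (Fin m) (Fin N) ℝ) (u : Fin m → V) (τ : ℝ)
    (hτ0 : 0 < τ) (hτ : τ < 2 / specNorm (A.transpose * A))
    (xstar : Fin N → V)
    (hmin : ∀ z : Fin N → V,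
        mnorm1 xstar + (1 / 2) * mnorm2 (matVec A xstar - u) ^ 2 ≤
          mnorm1 z + (1 / 2) * mnorm2 (matVec A z - u) ^ 2)
    (j : Fin N) (hxj : xstar j = 0)
    (hgj : ‖matVecT A (u - matVec A xstar) j‖ < 1)
    (x : ℕ → Fin N → V) (hiter : ∀ k, x (k + 1) = Sop τ A u (x k)) :
    ∃ K : ℕ, ∀ k ≥ K, x k j = 0 := by
  have hmin' : ∀ z, objective (mnorm1 ·.ofLp) (matVecₗ V A) (WithLp.toLp 2 u)
      (WithLp.toLp 2 xstar) ≤ objective (mnorm1 ·.ofLp) (matVecₗ V A) (WithLp.toLp 2 u) z :=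
    fun z => by
      rw [← WithLp.toLp_ofLp (p := 2) z, objective_matVecₗ, objective_matVecₗ]
      exact hmin z.ofLp
  have hobj := tendsto_objective (inner_matVecₗ A) (Real.sqrt_nonneg _) (norm_matVecₗ_le A) hτ0
    (mul_sq_sqrt_specNorm_lt hτ0 hτ) norm_le_mnorm1 hmin'
    (x := fun k => WithLp.toLp 2 (x k)) fun k => hiter k ▸ isProxStep_Sop hτ0.le A u (x k)
  have hgj' := norm_matVecₗ_transpose_apply A u xstar j ▸ hgj
  have hy := tendsto_forwardStep_apply (τ := τ) (inner_matVecₗ A) (Real.sqrt_nonneg _)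
    (norm_matVecₗ_le A) hmin' hxj hgj' hobj
  have hy₀ :
      ‖-(τ • (matVecₗ V Aᵀ (matVecₗ V A (WithLp.toLp 2 xstar) - WithLp.toLp 2 u)) j)‖ < τ := by
    rw [norm_neg, norm_smul, Real.norm_of_nonneg hτ0.le]
    exact mul_lt_of_lt_one_right hτ0 hgj'
  obtain ⟨K, hK⟩ := eventually_atTop.mp (eventually_softThresh_eq_zero hy hy₀)
  refine ⟨K + 1, fun k hk => ?_⟩
  obtain ⟨k, rfl⟩ := Nat.exists_eq_add_of_le' (Nat.one_le_of_lt hk)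
  rw [hiter k]
  exact hK k (by omega)

/-- finite convergence of components satisfying strict complementarity:
if `x*` minimizes `F`, `x*_j = 0` and `‖(A*(u − Ax*))_j‖ < 1`, then the forward-backward
iterates satisfy `x^k_j = 0` for all sufficiently large `k`. -/
theorem finite_convergence_of_strict_complementarity
    [NormedAddCommGroup V] [InnerProductSpace ℝ V] [CompleteSpace V]
    [TopologicalSpace.SeparableSpace V]
    {N m : ℕ} (hN : 0 < N) (hm : 0 < m)
    (A : Matrix (Fin m) (Fin N) ℝ) (u : Fin m → V) (τ : ℝ)
    (hτ0 : 0 < τ) (hτ : τ < 2 / specNorm (A.transpose * A))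
    (xstar : Fin N → V)
    (hmin : ∀ z : Fin N → V,
        mnorm1 xstar + (1 / 2) * mnorm2 (matVec A xstar - u) ^ 2 ≤
          mnorm1 z + (1 / 2) * mnorm2 (matVec A z - u) ^ 2)
    (j : Fin N) (hxj : xstar j = 0)
    (hgj : ‖matVecT A (u - matVec A xstar) j‖ < 1)
    (x : ℕ → Fin N → V) (hiter : ∀ k, x (k + 1) = Sop τ A u (x k)) :
    ∃ K : ℕ, ∀ k ≥ K, x k j = 0 :=
  finite_convergence_of_strict_complementarity_general A u τ hτ0 hτ xstar hmin j hxj hgj x hiter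
end
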